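/- arXiv:1807.11320 — 6 statements merged into one kernel-verified Lean document; each statement's English description precedes it below -/
import Mathlib

section
/- If d_min := min{|y_t − y_n| : t, n ∈ {p+1,...,N}, t ≠ n} is strictly positive, then for every choice of KDE-HMM parameters as described (any number of states M ≥ 1, any stochastic initial distribution π and transition matrix A, any strictly positive weights w_{qn}, and any positive bandwidths h_{ql}), the pseudo-likelihood satisfies f̃ ≤ (d_min·√(2πe))^{−(N−p)}. In particular, the pseudo-likelihood of a Gaussian-kernel KDE-HMM is bounded above uniformly over all parameter values; this is the key step in the proof of Proposition 1 (convergence of the pseudo-likelihood sequence under the guaranteed-ascent updates). -/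
/-!
Since `r e^{-r²/2} ≤ e^{-1/2}`, the Gaussian kernel satisfies `k r ≤ (|r| √(2πe))⁻¹`. In the
cross-validated density `F_t(q)` every numerator term is a denominator term times the factor
`k ((y t - y n) / h q 0)`, and `|y t - y n| ≥ d_min` for `n ≠ t`, so `F_t(q) ≤ (d_min √(2πe))⁻¹`.
The weights `π_{q_{p+1}} ∏ a_{q_{t-1} q_t}` form a probability distribution on state sequences,
so the pseudo-likelihood is an average of products of `N - p` such factors.
-/

open Finset Real

theorem Real.mul_exp_neg_sq_div_two_le (x : ℝ) : x * exp (-(x ^ 2) / 2) ≤ exp (-1 / 2) :=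
  calc x * exp (-(x ^ 2) / 2) ≤ exp (x - 1) * exp (-(x ^ 2) / 2) := by
        gcongr; linarith [add_one_le_exp (x - 1)]
    _ = exp (-1 / 2 - (x - 1) ^ 2 / 2) := by rw [← exp_add]; ring_nf
    _ ≤ exp (-1 / 2) := by gcongr; nlinarith [sq_nonneg (x - 1)]

noncomputable def gaussKernel (r : ℝ) : ℝ := (√(2 * π))⁻¹ * exp (-(r ^ 2) / 2)

theorem gaussKernel_pos (r : ℝ) : 0 < gaussKernel r := by unfold gaussKernel; positivity

theorem abs_mul_gaussKernel_le (r : ℝ) : |r| * gaussKernel r ≤ (√(2 * π * exp 1))⁻¹ := by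
  have hexp : (√(2 * π * exp 1))⁻¹ = (√(2 * π))⁻¹ * exp (-1 / 2) := by
    rw [sqrt_mul (by positivity), ← exp_half, mul_inv, ← exp_neg]; ring_nf
  rw [hexp, gaussKernel, mul_left_comm, ← sq_abs r]
  gcongr
  exact mul_exp_neg_sq_div_two_le |r|

theorem gaussKernel_le_of_le_abs {δ r : ℝ} (hδ : 0 < δ) (hr : δ ≤ |r|) :
    gaussKernel r ≤ (δ * √(2 * π * exp 1))⁻¹ := by
  rw [mul_inv, ← div_eq_inv_mul, le_div_iff₀ hδ, mul_comm]
  exact (mul_le_mul_of_nonneg_right hr (gaussKernel_pos r).le).trans (abs_mul_gaussKernel_le r)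

theorem gaussKernel_div_le_of_le_abs {δ r a : ℝ} (hδ : 0 < δ) (ha : 0 < a) (hr : δ ≤ |r|) :
    gaussKernel (r / a) ≤ a * (δ * √(2 * π * exp 1))⁻¹ := by
  have hδa : δ / a ≤ |r / a| := by rw [abs_div, abs_of_pos ha]; gcongr
  have := gaussKernel_le_of_le_abs (div_pos hδ ha) hδa
  rwa [div_mul_eq_mul_div, inv_div, div_eq_mul_inv] at this

theorem Finset.prod_range_succ_eq_mul_prod_Icc {M : Type*} [CommMonoid M] (f : ℕ → M) (p : ℕ) :
    ∏ l ∈ range (p + 1), f l = f 0 * ∏ l ∈ Icc 1 p, f l := by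
  rw [range_eq_Ico, prod_eq_prod_Ico_succ_bot p.succ_pos, ← Ico_add_one_right_eq_Icc]; rfl

theorem sum_mul_div_mul_sum_le {α : Type*} {s : Finset α} {u v : α → ℝ} {a c : ℝ}
    (ha : 0 < a) (hc : 0 ≤ c) (hv : ∀ n ∈ s, 0 ≤ v n) (hu : ∀ n ∈ s, u n ≤ a * c) :
    (∑ n ∈ s, u n * v n) / (a * ∑ n ∈ s, v n) ≤ c := by
  rcases (sum_nonneg hv).eq_or_lt with hzero | hpos
  · rw [← hzero, mul_zero, div_zero]; exact hc
  rw [div_le_iff₀ (by positivity), mul_sum, mul_sum]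
  exact sum_le_sum fun n hn => by nlinarith [hu n hn, hv n hn]

/-- The paper's `F_t(q)` for a state with weights `w` and bandwidths `h`, where `s = {p+1, …, N}`. -/
noncomputable def cvKernelDensity (s : Finset ℕ) (p : ℕ) (y w h : ℕ → ℝ) (t : ℕ) : ℝ :=
  (∑ n ∈ s.erase t, w n * ∏ l ∈ range (p + 1), gaussKernel ((y (t - l) - y (n - l)) / h l)) /
    (h 0 * ∑ n ∈ s.erase t, w n * ∏ l ∈ Icc 1 p, gaussKernel ((y (t - l) - y (n - l)) / h l))

section cvKernelDensity

variable {s : Finset ℕ} {p : ℕ} {y w h : ℕ → ℝ} {t : ℕ}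

theorem cvKernelDensity_nonneg (hw : ∀ n ∈ s.erase t, 0 ≤ w n) (hh : 0 ≤ h 0) :
    0 ≤ cvKernelDensity s p y w h t := by
  unfold cvKernelDensity
  refine div_nonneg (sum_nonneg fun n hn => ?_) (mul_nonneg hh (sum_nonneg fun n hn => ?_)) <;>
    exact mul_nonneg (hw n hn) (prod_nonneg fun l _ => (gaussKernel_pos _).le)

theorem cvKernelDensity_le {δ : ℝ} (hw : ∀ n ∈ s.erase t, 0 ≤ w n) (hh : 0 < h 0) (hδ : 0 < δ)
    (hsep : ∀ n ∈ s.erase t, δ ≤ |y t - y n|) :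
    cvKernelDensity s p y w h t ≤ (δ * √(2 * π * exp 1))⁻¹ := by
  unfold cvKernelDensity
  simp_rw [prod_range_succ_eq_mul_prod_Icc, Nat.sub_zero, mul_left_comm (w _)]
  exact sum_mul_div_mul_sum_le hh (by positivity)
    (fun n hn => mul_nonneg (hw n hn) (prod_nonneg fun l _ => (gaussKernel_pos _).le))
    (fun n hn => gaussKernel_div_le_of_le_abs hδ hh (hsep n hn))

end cvKernelDensity

theorem Fin.prod_dite_succ_lt {M : Type*} [CommMonoid M] {m : ℕ}
    (f : Fin (m + 1) → Fin (m + 1) → M) :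
    (∏ i : Fin (m + 1), if hi : (i : ℕ) + 1 < m + 1 then f i ⟨i + 1, hi⟩ else 1) =
      ∏ i : Fin m, f i.castSucc i.succ := by
  rw [Fin.prod_univ_castSucc]
  simp [Fin.succ]

theorem sum_mul_prod_transition {ι : Type*} [Fintype ι] (A : ι → ι → ℝ)
    (hA : ∀ q, ∑ q', A q q' = 1) :
    ∀ (m : ℕ) (π₀ : ι → ℝ),
      ∑ σ : Fin (m + 1) → ι, π₀ (σ 0) * ∏ i : Fin m, A (σ i.castSucc) (σ i.succ) = ∑ q, π₀ q
  | 0, π₀ => by simpa using (Equiv.funUnique (Fin 1) ι).sum_comp π₀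
  | m + 1, π₀ => by
    rw [← (Fin.consEquiv fun _ => ι).sum_comp, Fintype.sum_prod_type]
    refine sum_congr rfl fun q _ => ?_
    simp only [Fin.consEquiv_apply, Fin.cons_zero, Fin.prod_univ_succ, Fin.castSucc_zero,
      Fin.cons_succ, ← Fin.succ_castSucc]
    rw [← mul_sum, sum_mul_prod_transition A hA m (A q), hA, mul_one]

theorem sum_path_mul_prod_le {ι : Type*} [Fintype ι] {m : ℕ} (hm : 0 < m) {π₀ : ι → ℝ}
    {A : ι → ι → ℝ} {F : Fin m → ι → ℝ} {C : ℝ} (hπ0 : ∀ q, 0 ≤ π₀ q) (hπ1 : ∑ q, π₀ q = 1)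
    (hA0 : ∀ q q', 0 ≤ A q q') (hA1 : ∀ q, ∑ q', A q q' = 1) (hF0 : ∀ i q, 0 ≤ F i q)
    (hFC : ∀ i q, F i q ≤ C) :
    ∑ σ : Fin m → ι, π₀ (σ ⟨0, hm⟩) *
        (∏ i : Fin m, if hi : (i : ℕ) + 1 < m then A (σ i) (σ ⟨(i : ℕ) + 1, hi⟩) else 1) *
        ∏ i, F i (σ i) ≤ C ^ m := by
  obtain ⟨m, rfl⟩ := Nat.exists_eq_add_one_of_ne_zero hm.ne'
  have hF : ∀ σ : Fin (m + 1) → ι, ∏ i, F i (σ i) ≤ C ^ (m + 1) := fun σ => by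
    simpa using prod_le_prod (s := univ) (fun i _ => hF0 i (σ i)) (fun i _ => hFC i (σ i))
  calc _ ≤ ∑ σ : Fin (m + 1) → ι, π₀ (σ 0) *
          (∏ i : Fin m, A (σ i.castSucc) (σ i.succ)) * C ^ (m + 1) := by
        refine sum_le_sum fun σ _ => ?_
        rw [Fin.prod_dite_succ_lt fun i j => A (σ i) (σ j)]
        exact mul_le_mul_of_nonneg_left (hF σ)
          (mul_nonneg (hπ0 _) (prod_nonneg fun i _ => hA0 _ _))
    _ = C ^ (m + 1) := by rw [← sum_mul, sum_mul_prod_transition A hA1, hπ1, one_mul]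

open Finset in
/-- Uniform upper bound on the pseudo-likelihood of a Gaussian-kernel KDE-HMM: if the
minimum separation `dmin` between distinct data points (with indices in `{p+1,…,N}`) is
strictly positive, then for every choice of KDE-HMM parameters (any number of states
`M ≥ 1`, any stochastic initial distribution `π` and transition matrix `A`, any strictly
positive weights `w q n`, and any positive bandwidths `h q l`) the pseudo-likelihood is at
most `(dmin √(2πe))^{-(N-p)}`.  This is the key step in the proof of Proposition 1. -/
theorem kdehmm_pseudolikelihood_uniform_bound
    (p N : ℕ) (hN : p + 1 < N) (y : ℕ → ℝ)
    (M : ℕ)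
    (π0 : Fin M → ℝ) (hπ0 : ∀ q, 0 ≤ π0 q) (hπ1 : ∑ q, π0 q = 1)
    (A : Fin M → Fin M → ℝ) (hA0 : ∀ q q', 0 ≤ A q q') (hA1 : ∀ q, ∑ q', A q q' = 1)
    (w : Fin M → ℕ → ℝ) (hw : ∀ q n, n ∈ Finset.Icc (p + 1) N → 0 < w q n)
    (h : Fin M → ℕ → ℝ) (hh : ∀ q l, l ≤ p → 0 < h q l)
    (hS : ((Finset.Icc (p + 1) N ×ˢ Finset.Icc (p + 1) N).filter
        fun tn => tn.1 ≠ tn.2).Nonempty)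
    (dmin : ℝ)
    (hdmin_def : dmin = ((Finset.Icc (p + 1) N ×ˢ Finset.Icc (p + 1) N).filter
        fun tn => tn.1 ≠ tn.2).inf' hS fun tn => |y tn.1 - y tn.2|)
    (hdmin_pos : 0 < dmin) :
    let k : ℝ → ℝ := fun r => (Real.sqrt (2 * Real.pi))⁻¹ * Real.exp (-(r ^ 2) / 2)
    -- cross-validated state-conditional next-step density evaluated at `y t`
    let F : ℕ → Fin M → ℝ := fun t q =>
      (∑ n ∈ (Finset.Icc (p + 1) N).erase t,
          w q n * ∏ l ∈ Finset.range (p + 1), k ((y (t - l) - y (n - l)) / h q l)) /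
        (h q 0 * ∑ n ∈ (Finset.Icc (p + 1) N).erase t,
          w q n * ∏ l ∈ Finset.Icc 1 p, k ((y (t - l) - y (n - l)) / h q l))
    -- pseudo-likelihood: sum over all hidden-state sequences (index `i : Fin (N - p)`
    -- corresponds to time `t = p + 1 + i`)
    (∑ σ : Fin (N - p) → Fin M,
        π0 (σ ⟨0, by omega⟩) *
          (∏ i : Fin (N - p),
            if hi : (i : ℕ) + 1 < N - p then A (σ i) (σ ⟨(i : ℕ) + 1, hi⟩) else 1) *
          ∏ i : Fin (N - p), F (p + 1 + (i : ℕ)) (σ i))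
      ≤ ((dmin * Real.sqrt (2 * Real.pi * Real.exp 1))⁻¹) ^ (N - p) := by
  intro k F
  have hsep : ∀ t ∈ Icc (p + 1) N, ∀ n ∈ (Icc (p + 1) N).erase t, dmin ≤ |y t - y n| :=
    fun t ht n hn => by
      rw [hdmin_def]
      exact inf'_le _ (b := (t, n)) <| mem_filter.2
        ⟨mem_product.2 ⟨ht, mem_of_mem_erase hn⟩, (ne_of_mem_erase hn).symm⟩
  have hmem (i : Fin (N - p)) : p + 1 + (i : ℕ) ∈ Icc (p + 1) N := mem_Icc.2 ⟨by omega, by omega⟩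
  have hw' (q : Fin M) (t : ℕ) : ∀ n ∈ (Icc (p + 1) N).erase t, 0 ≤ w q n :=
    fun n hn => (hw q n (mem_of_mem_erase hn)).le
  exact sum_path_mul_prod_le (F := fun i q => F (p + 1 + i) q) _ hπ0 hπ1 hA0 hA1
    (fun i q => cvKernelDensity_nonneg (hw' q _) (hh q 0 p.zero_le).le)
    (fun i q => cvKernelDensity_le (hw' q _) (hh q 0 p.zero_le) hdmin_pos (hsep _ (hmem i)))
end

section
/- Let Z be a nonempty finite set and let a, b : Z → ℝ satisfy a(z) > 0 and b(z) > 0 for all z ∈ Z. If Σ_{z∈Z} a(z)·ln b(z) ≥ Σ_{z∈Z} a(z)·ln a(z), then Σ_{z∈Z} b(z) ≥ Σ_{z∈Z} a(z). In the EM interpretation, a(z) and b(z) are the complete-data likelihoods p(y, z; θ̂) and p(y, z; θ') over a finite latent space: any updated parameter estimate that does not decrease the EM auxiliary function Q(θ'; θ̂) = Σ_z p(z | y; θ̂)·ln p(y, z; θ') is guaranteed not to decrease the actual (marginal) likelihood of the data. -/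
open Finset in
/-- Jensen-inequality-based ascent guarantee for (generalized) EM over a finite latent
space: if the complete-data log-likelihood average under `a` does not decrease when the
complete-data likelihoods `a z` are replaced by `b z`, then the marginal likelihood
`∑ z, b z` is at least `∑ z, a z`. -/
theorem gem_ascent_guarantee (Z : Type*) [Fintype Z] [Nonempty Z] (a b : Z → ℝ)
    (ha : ∀ z, 0 < a z) (hb : ∀ z, 0 < b z)
    (h : ∑ z, a z * Real.log (b z) ≥ ∑ z, a z * Real.log (a z)) :
    ∑ z, b z ≥ ∑ z, a z := by
  have key : ∀ z, a z * Real.log (b z) - a z * Real.log (a z) ≤ b z - a z := by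
    intro z
    have hlog : Real.log (b z / a z) ≤ b z / a z - 1 :=
      Real.log_le_sub_one_of_pos (div_pos (hb z) (ha z))
    have h2 : Real.log (b z / a z) = Real.log (b z) - Real.log (a z) :=
      Real.log_div (hb z).ne' (ha z).ne'
    have h3 : a z * (Real.log (b z) - Real.log (a z)) ≤ a z * (b z / a z - 1) :=
      mul_le_mul_of_nonneg_left (h2 ▸ hlog) (ha z).le
    have h4 : a z * (b z / a z - 1) = b z - a z := by
      field_simp [(ha z).ne']
    nlinarith [h3, h4]
  have hsum : ∑ z, (a z * Real.log (b z) - a z * Real.log (a z)) ≤ ∑ z, (b z - a z) :=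
    Finset.sum_le_sum (fun z _ => key z)
  rw [Finset.sum_sub_distrib, Finset.sum_sub_distrib] at hsum
  linarith
end

section
/- Under the stated hypotheses, W + Σ_{t∈T} Σ_{n∈T, n≠t} γ_t·(ρ^num_{nt} − ρ^den_{nt}) ≥ Σ_{t∈T} γ_t > 0. That is, the denominator W_q + Σ_{t,n≠t} γ^diff_{qnt} appearing in the KDE-HMM bandwidth and weight update formulas is strictly positive, so the updated parameters are always well defined. -/
/-- The function `G` from the reverse-Jensen bounds of Jebara (2001). -/
noncomputable def reverseJensenG (γ : ℝ) : ℝ :=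
  if γ < 1 / 6 then
    ((γ - 1) / Real.log γ) ^ 2 - 1 / (4 * Real.log γ)
  else
    ((1 / 6 - 1) / Real.log (1 / 6)) ^ 2 - 1 / (4 * Real.log (1 / 6)) + γ - 1 / 6

/- Each entry of `W` other than `ρ^den` is nonnegative, and the `ρ^den` terms cancel
against `∑ γ_t (ρ^num - ρ^den)`; what is left is
`∑_t γ_t ∑_{n ≠ t} (ρ^num_{nt} + ω_{nt}) ≥ ∑_t γ_t`,
because the `ρ^num_{·t}` sum to one. The penalties are nonnegative since `G ≥ 0` on `(0, ∞)`
(on `(0, 1/6)` both of its terms are, as `log γ < 0`) and `ξ^w_n = 1/ŵ_n - 1 ≥ 0`. -/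

open Finset

theorem reverseJensenG_nonneg {x : ℝ} (hx : 0 < x) : 0 ≤ reverseJensenG x := by
  unfold reverseJensenG
  split_ifs with hx6
  · have hlog : Real.log x < 0 := Real.log_neg hx (by linarith)
    have hinv : 1 / (4 * Real.log x) < 0 := div_neg_of_pos_of_neg one_pos (by linarith)
    nlinarith [sq_nonneg ((x - 1) / Real.log x)]
  · have hlog : Real.log (1 / 6 : ℝ) < 0 := Real.log_neg (by norm_num) (by norm_num)
    have hinv : 1 / (4 * Real.log (1 / 6 : ℝ)) < 0 :=
      div_neg_of_pos_of_neg one_pos (by linarith)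
    nlinarith [sq_nonneg ((1 / 6 - 1 : ℝ) / Real.log (1 / 6))]

theorem one_div_sub_one_nonneg {w : ℝ} (hw : 0 < w) (hw_le_one : w ≤ 1) : 0 ≤ 1 / w - 1 :=
  sub_nonneg.2 (one_le_one_div hw hw_le_one)

theorem sum_le_sum_sum_mul_add_of_sum_eq_one {ι κ R : Type*}
    [Semiring R] [PartialOrder R] [IsOrderedRing R]
    (s : Finset ι) (S : ι → Finset κ) (γ : ι → R) (ρ ε : κ → ι → R)
    (hγ : ∀ t ∈ s, 0 ≤ γ t) (hρ : ∀ t ∈ s, ∑ n ∈ S t, ρ n t = 1)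
    (hε : ∀ t ∈ s, ∀ n ∈ S t, 0 ≤ ε n t) :
    ∑ t ∈ s, γ t ≤ ∑ t ∈ s, ∑ n ∈ S t, γ t * (ρ n t + ε n t) := by
  refine sum_le_sum fun t ht => ?_
  calc γ t = ∑ n ∈ S t, γ t * ρ n t := by rw [← mul_sum, hρ t ht, mul_one]
    _ ≤ ∑ n ∈ S t, γ t * (ρ n t + ε n t) := sum_le_sum fun n hn =>
        mul_le_mul_of_nonneg_left (le_add_of_nonneg_right (hε t ht n hn)) (hγ t ht)

open Finset in
theorem kdehmm_update_denominator_pos_general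
    (T : Type*) [Fintype T] [DecidableEq T]
    (p : ℕ) (hp : 1 ≤ p)
    (γ : T → ℝ) (hγ : ∀ t, 0 ≤ γ t) (hγsum : 0 < ∑ t, γ t)
    (ρnum ρden : T → T → ℝ)
    (hρnum_sum : ∀ t, ∑ n ∈ univ.erase t, ρnum n t = 1)
    (hρden_pos : ∀ t n, n ≠ t → 0 < ρden n t)
    (w : T → ℝ) (hw_pos : ∀ n, 0 < w n) (hw_le_one : ∀ n, w n ≤ 1)
    (ξh : Fin p → T → T → ℝ) :
    (let ξw : T → ℝ := fun n => 1 / w n - 1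
     let ωh : T → T → ℝ := fun n t =>
       2 * reverseJensenG (ρden n t / 2) * ∑ l : Fin p, (ξh l n t) ^ 2
     let ωw : T → T → ℝ := fun n t => 4 * reverseJensenG (ρden n t / 2) * ξw n
     let ω' : T → T → ℝ := fun n t =>
       ρden n t *
         max (Finset.univ.sup' ⟨⟨0, hp⟩, Finset.mem_univ _⟩ fun l : Fin p => ξh l n t)
           (ξw n)
     let W : ℝ :=
       ∑ t, ∑ n ∈ univ.erase t, γ t * (ρden n t + ωh n t + ωw n t + ω' n t)
     W + ∑ t, ∑ n ∈ univ.erase t, γ t * (ρnum n t - ρden n t) ≥ ∑ t, γ t) ∧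
      0 < ∑ t, γ t := by
  refine ⟨?_, hγsum⟩
  intro ξw ωh ωw ω' W
  have hξw n : 0 ≤ ξw n := one_div_sub_one_nonneg (hw_pos n) (hw_le_one n)
  have hω t n (hn : n ∈ univ.erase t) : 0 ≤ ωh n t + ωw n t + ω' n t := by
    have hρ := hρden_pos t n (ne_of_mem_erase hn)
    have hG := reverseJensenG_nonneg (half_pos hρ)
    have hωh : 0 ≤ ωh n t := by
      have := sum_nonneg fun l (_ : l ∈ univ) => sq_nonneg (ξh l n t)
      positivity
    have hωw : 0 ≤ ωw n t := by have := hξw n; positivity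
    have hω' : 0 ≤ ω' n t := mul_nonneg hρ.le (le_max_of_le_right (hξw n))
    positivity
  calc ∑ t, γ t
      ≤ ∑ t, ∑ n ∈ univ.erase t, γ t * (ρnum n t + (ωh n t + ωw n t + ω' n t)) :=
        sum_le_sum_sum_mul_add_of_sum_eq_one _ _ _ _ _ (fun t _ => hγ t)
          (fun t _ => hρnum_sum t) (fun t _ => hω t)
    _ = W + ∑ t, ∑ n ∈ univ.erase t, γ t * (ρnum n t - ρden n t) := by
        simp only [W, ← sum_add_distrib]
        exact sum_congr rfl fun t _ => sum_congr rfl fun n _ => by ring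

open Finset in
/-- The denominator `W_q + ∑_{t, n ≠ t} γ^diff_{qnt}` appearing in the KDE-HMM bandwidth
and weight update formulas is at least `∑ t, γ t > 0`, so the updated parameters are
always well defined. -/
theorem kdehmm_update_denominator_pos
    (T : Type*) [Fintype T] [DecidableEq T] (hT : 2 ≤ Fintype.card T)
    (p : ℕ) (hp : 1 ≤ p)
    (γ : T → ℝ) (hγ : ∀ t, 0 ≤ γ t) (hγsum : 0 < ∑ t, γ t)
    (ρnum ρden : T → T → ℝ)
    (hρnum_nonneg : ∀ t n, n ≠ t → 0 ≤ ρnum n t)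
    (hρnum_sum : ∀ t, ∑ n ∈ univ.erase t, ρnum n t = 1)
    (hρden_pos : ∀ t n, n ≠ t → 0 < ρden n t)
    (hρden_le_one : ∀ t n, n ≠ t → ρden n t ≤ 1)
    (hρden_sum : ∀ t, ∑ n ∈ univ.erase t, ρden n t = 1)
    (w : T → ℝ) (hw_pos : ∀ n, 0 < w n) (hw_le_one : ∀ n, w n ≤ 1)
    (ξh : Fin p → T → T → ℝ) :
    (let ξw : T → ℝ := fun n => 1 / w n - 1
     let ωh : T → T → ℝ := fun n t =>
       2 * reverseJensenG (ρden n t / 2) * ∑ l : Fin p, (ξh l n t) ^ 2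
     let ωw : T → T → ℝ := fun n t => 4 * reverseJensenG (ρden n t / 2) * ξw n
     let ω' : T → T → ℝ := fun n t =>
       ρden n t *
         max (Finset.univ.sup' ⟨⟨0, hp⟩, Finset.mem_univ _⟩ fun l : Fin p => ξh l n t)
           (ξw n)
     let W : ℝ :=
       ∑ t, ∑ n ∈ univ.erase t, γ t * (ρden n t + ωh n t + ωw n t + ω' n t)
     W + ∑ t, ∑ n ∈ univ.erase t, γ t * (ρnum n t - ρden n t) ≥ ∑ t, γ t) ∧
      0 < ∑ t, γ t :=
  kdehmm_update_denominator_pos_general T p hp γ hγ hγsum ρnum ρden hρnum_sum hρden_pos w hw_pos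
    hw_le_one ξh
end

section
/- Let I be a nonempty finite index set, and let c_i ≥ 0 and d_i ∈ ℝ for i ∈ I with C := Σ_i c_i > 0 and S := Σ_i c_i·d_i² > 0. Then the function F : (0, ∞) → ℝ given by F(h) = Σ_i c_i·(−ln h − d_i²/(2h²)) = −C·ln h − S/(2h²) attains a strict global maximum at h* = √(S/C); i.e., F(h) ≤ F(h*) for all h > 0, with equality if and only if h = h*. This establishes that the next-step bandwidth update ĥ² = (Σ_{t,n≠t} γ_{qt}·ρ^num_{qnt}·(y_t − y_n)²)/(Σ_{t,n≠t} γ_{qt}·ρ^num_{qnt}) is the exact maximizer of the corresponding terms of the EM auxiliary function for a Gaussian kernel. -/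
/-!
Writing `S = C a²` with `a = √(S/C)` and `x = a² / h²`, the objective satisfies
`F a - F h = (C / 2) (x - 1 - log x)`, which is nonnegative by `log x ≤ x - 1` and vanishes
only at `x = 1`, i.e. at `h = a`.
-/

open Real

noncomputable def bandwidthObjective (C S h : ℝ) : ℝ := -C * log h - S / (2 * h ^ 2)

theorem sum_mul_neg_log_sub_div_eq {ι : Type*} (s : Finset ι) (c d : ι → ℝ) (h : ℝ) :
    ∑ i ∈ s, c i * (-log h - d i ^ 2 / (2 * h ^ 2)) =
      bandwidthObjective (∑ i ∈ s, c i) (∑ i ∈ s, c i * d i ^ 2) h := by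
  simp only [bandwidthObjective, Finset.sum_mul, Finset.sum_div, ← Finset.sum_neg_distrib,
    ← Finset.sum_sub_distrib]
  exact Finset.sum_congr rfl fun i _ => by ring

theorem bandwidthObjective_sub_eq {C a h : ℝ} (ha : a ≠ 0) (hh : h ≠ 0) :
    bandwidthObjective C (C * a ^ 2) a - bandwidthObjective C (C * a ^ 2) h =
      C / 2 * (a ^ 2 / h ^ 2 - 1 - log (a ^ 2 / h ^ 2)) := by
  rw [bandwidthObjective, bandwidthObjective, log_div (pow_ne_zero 2 ha) (pow_ne_zero 2 hh),
    log_pow, log_pow]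
  field_simp
  ring

theorem bandwidthObjective_le {C a h : ℝ} (hC : 0 ≤ C) (ha : a ≠ 0) (hh : h ≠ 0) :
    bandwidthObjective C (C * a ^ 2) h ≤ bandwidthObjective C (C * a ^ 2) a := by
  have hx : 0 ≤ a ^ 2 / h ^ 2 - 1 - log (a ^ 2 / h ^ 2) :=
    sub_nonneg.mpr (log_le_sub_one_of_pos (by positivity))
  have := bandwidthObjective_sub_eq (C := C) ha hh
  nlinarith

theorem bandwidthObjective_lt_of_ne {C a h : ℝ} (hC : 0 < C) (ha : 0 < a) (hh : 0 < h)
    (hne : h ≠ a) :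
    bandwidthObjective C (C * a ^ 2) h < bandwidthObjective C (C * a ^ 2) a := by
  have hx1 : a ^ 2 / h ^ 2 ≠ 1 := by
    rw [Ne, div_eq_one_iff_eq (by positivity), pow_left_inj₀ ha.le hh.le two_ne_zero]
    exact hne.symm
  have hx : 0 < a ^ 2 / h ^ 2 - 1 - log (a ^ 2 / h ^ 2) :=
    sub_pos.mpr (log_lt_sub_one_of_pos (by positivity) hx1)
  have := bandwidthObjective_sub_eq (C := C) ha.ne' hh.ne'
  nlinarith

open Finset in
theorem bandwidth_update_maximizes_auxiliary_general
    (I : Type*) [Fintype I] (c d : I → ℝ)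
    (hC : 0 < ∑ i, c i) (hS : 0 < ∑ i, c i * d i ^ 2) :
    let C : ℝ := ∑ i, c i
    let S : ℝ := ∑ i, c i * d i ^ 2
    let F : ℝ → ℝ := fun h => ∑ i, c i * (-Real.log h - d i ^ 2 / (2 * h ^ 2))
    let hstar : ℝ := Real.sqrt (S / C)
    ∀ h : ℝ, 0 < h → F h ≤ F hstar ∧ (F h = F hstar ↔ h = hstar) := by
  intro C S F hstar h hh
  have hstar_pos : 0 < hstar := sqrt_pos.mpr (div_pos hS hC)
  have hS_eq : S = C * hstar ^ 2 := by
    rw [sq_sqrt (div_pos hS hC).le, mul_div_cancel₀ _ hC.ne']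
  have hF : ∀ u, F u = bandwidthObjective C (C * hstar ^ 2) u := fun u => by
    rw [← hS_eq]
    exact sum_mul_neg_log_sub_div_eq univ c d u
  simp only [hF]
  refine ⟨bandwidthObjective_le hC.le hstar_pos.ne' hh.ne', fun heq => ?_, fun h_eq => h_eq ▸ rfl⟩
  by_contra hne
  exact (bandwidthObjective_lt_of_ne hC hstar_pos hh hne).ne heq

open Finset in
/-- The function `F(h) = ∑ i, c i * (−ln h − d i²/(2h²)) = −C ln h − S/(2h²)` attains a
strict global maximum over `h > 0` at `h* = √(S/C)`.  This shows the next-step bandwidth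
update of the Gaussian-kernel KDE-HMM exactly maximizes the corresponding terms of the EM
auxiliary function. -/
theorem bandwidth_update_maximizes_auxiliary
    (I : Type*) [Fintype I] [Nonempty I] (c d : I → ℝ)
    (hc : ∀ i, 0 ≤ c i) (hC : 0 < ∑ i, c i) (hS : 0 < ∑ i, c i * d i ^ 2) :
    let C : ℝ := ∑ i, c i
    let S : ℝ := ∑ i, c i * d i ^ 2
    let F : ℝ → ℝ := fun h => ∑ i, c i * (-Real.log h - d i ^ 2 / (2 * h ^ 2))
    let hstar : ℝ := Real.sqrt (S / C)
    ∀ h : ℝ, 0 < h → F h ≤ F hstar ∧ (F h = F hstar ↔ h = hstar) :=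
  bandwidth_update_maximizes_auxiliary_general I c d hC hS
end

section
/- For every (x_1, ..., x_p) ∈ ℝ^p, ∫_ℝ g(ξ, x_1, ..., x_p) dξ = ∫_ℝ g(x_1, ..., x_p, ξ) dξ. That is, under periodic extension of the training data, the p-dimensional marginal of the joint KDE obtained by integrating out the first coordinate coincides with the marginal obtained by integrating out the last coordinate, so all p-dimensional marginal distributions of the joint KDE are identical under time shift. -/
/-!
Integrating out ξ from `g (ξ, x)` or from `g (x, ξ)` removes one kernel factor of each summand,
which contributes `∫ k`, whatever its centre. What remains is the average over `n ∈ [1, N]` of the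
product of the kernel factors of a window of `p` consecutive data points, the window starting at
`n - p + 1` for the first marginal and at `n - p` for the second. The window product is
`N`-periodic in its starting point, so averaging it over a full period is shift invariant.
-/

open MeasureTheory Finset Function

theorem integral_one_div_mul_comp_sub_div (k : ℝ → ℝ) {h : ℝ} (hh : 0 < h) (c : ℝ) :
    ∫ ξ, 1 / h * k ((ξ - c) / h) = ∫ r, k r := by
  rw [integral_const_mul, integral_sub_right_eq_self (fun ξ => k (ξ / h)) c,
    Measure.integral_comp_div, smul_eq_mul, abs_of_pos hh, ← mul_assoc, one_div_mul_cancel hh.ne',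
    one_mul]

theorem MeasureTheory.Integrable.one_div_mul_comp_sub_div {k : ℝ → ℝ} (hk : Integrable k)
    {h : ℝ} (hh : h ≠ 0) (c : ℝ) : Integrable (fun ξ => 1 / h * k ((ξ - c) / h)) :=
  ((hk.comp_div hh).comp_sub_right c).const_mul _

theorem integral_sum_kernel_mul {ι : Type*} (s : Finset ι) {k : ℝ → ℝ} (hk : Integrable k)
    {h : ℝ} (hh : 0 < h) (b c : ι → ℝ) :
    ∫ ξ, ∑ n ∈ s, 1 / h * k ((ξ - b n) / h) * c n = (∫ r, k r) * ∑ n ∈ s, c n := by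
  rw [integral_finsetSum _ fun n _ => (hk.one_div_mul_comp_sub_div hh.ne' (b n)).mul_const (c n),
    mul_sum]
  simp_rw [integral_mul_const, integral_one_div_mul_comp_sub_div k hh]

theorem Fin.prod_univ_cons_window {α M : Type*} [CommMonoid M] {p : ℕ} (f : ℤ → α → M) (m : ℤ)
    (a : α) (x : Fin p → α) :
    ∏ j : Fin (p + 1), f (m + j) ((Fin.cons a x : Fin (p + 1) → α) j) =
      f m a * ∏ i : Fin p, f (m + 1 + i) (x i) := by
  simp [Fin.prod_univ_succ, add_assoc, add_comm (1 : ℤ)]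

theorem Fin.prod_univ_snoc_window {α M : Type*} [CommMonoid M] {p : ℕ} (f : ℤ → α → M) (m : ℤ)
    (a : α) (x : Fin p → α) :
    ∏ j : Fin (p + 1), f (m + j) ((Fin.snoc x a : Fin (p + 1) → α) j) =
      f (m + p) a * ∏ i : Fin p, f (m + i) (x i) := by
  simp [Fin.prod_univ_castSucc, mul_comm]

theorem Function.Periodic.prod_window {α M : Type*} [CommMonoid M] {p : ℕ} {f : ℤ → α → M}
    {N : ℤ} (hf : ∀ a, Periodic (f · a) N) (x : Fin p → α) :
    Periodic (fun m => ∏ i : Fin p, f (m + i) (x i)) N := by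
  have := Finset.periodic_prod (f := fun (i : Fin p) m => f (m + i) (x i)) univ
    fun i _ => (hf (x i)).add_const (i : ℤ)
  simpa using this

theorem Function.Periodic.sum_Icc_comp_add_one {M : Type*} [AddCancelCommMonoid M] {F : ℤ → M}
    {N : ℕ} (hF : Periodic F N) : ∑ n ∈ Icc 1 N, F (n + 1) = ∑ n ∈ Icc 1 N, F n := by
  have key := (sum_range_succ (fun k : ℕ => F (1 + k)) N).symm.trans
    (sum_range_succ' (fun k : ℕ => F (1 + k)) N)
  rw [hF 1] at key
  rw [← Finset.Ico_add_one_right_eq_Icc, sum_Ico_eq_sum_range, sum_Ico_eq_sum_range]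
  simpa [add_comm, add_left_comm] using (add_right_cancel key).symm

open MeasureTheory Finset in
theorem periodic_kde_marginals_shift_invariant_general
    (p N : ℕ)
    (y : ℤ → ℝ) (hy_per : ∀ n : ℤ, y (n + N) = y n)
    (h : ℝ) (hh : 0 < h)
    (k : ℝ → ℝ)
    (hk_int : ∫ r : ℝ, k r = 1) :
    let g : (Fin (p + 1) → ℝ) → ℝ := fun x =>
      (1 / (N : ℝ)) * ∑ n ∈ Finset.Icc 1 N,
        ∏ j : Fin (p + 1), (1 / h) * k ((x j - y ((n : ℤ) - (p + 1) + ((j : ℕ) + 1))) / h)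
    ∀ x : Fin p → ℝ,
      (∫ ξ : ℝ, g (Fin.cons ξ x)) = ∫ ξ : ℝ, g (Fin.snoc x ξ) := by
  intro g x
  have hk : Integrable k := .of_integral_ne_zero (by simp [hk_int])
  set K : ℤ → ℝ → ℝ := fun t u => 1 / h * k ((u - y t) / h)
  set F : ℤ → ℝ := fun m => ∏ i : Fin p, K (m + i) (x i)
  have hF : Periodic (fun n => F (n - p)) N :=
    (Periodic.prod_window (fun a t => by simp [K, hy_per]) x).sub_const _
  have hidx : ∀ (n : ℕ) (j : Fin (p + 1)), (n : ℤ) - (p + 1) + ((j : ℕ) + 1) = n - p + j :=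
    fun n j => by ring
  have hg : ∀ z, g z = 1 / N * ∑ n ∈ Icc 1 N, ∏ j : Fin (p + 1), K (n - p + j) (z j) := fun z => by
    simp only [g, K, hidx]
  simp only [hg, Fin.prod_univ_cons_window, Fin.prod_univ_snoc_window, sub_add_cancel]
  simp only [K]
  rw [integral_const_mul, integral_const_mul, integral_sum_kernel_mul _ hk hh,
    integral_sum_kernel_mul _ hk hh]
  congr 2
  simpa only [F, K, sub_add_eq_add_sub] using hF.sum_Icc_comp_add_one

open MeasureTheory Finset in
/-- Under periodic extension of the training data, the `p`-dimensional marginal of the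
joint KDE obtained by integrating out the first coordinate coincides with the marginal
obtained by integrating out the last coordinate: all `p`-dimensional marginals of the
joint KDE are identical under time shift. -/
theorem periodic_kde_marginals_shift_invariant
    (p N : ℕ) (hp : 1 ≤ p) (hN : 1 ≤ N)
    (y : ℤ → ℝ) (hy_per : ∀ n : ℤ, y (n + N) = y n)
    (h : ℝ) (hh : 0 < h)
    (k : ℝ → ℝ) (hk_meas : Measurable k) (hk_nonneg : ∀ r, 0 ≤ k r)
    (hk_int : ∫ r : ℝ, k r = 1) :
    let g : (Fin (p + 1) → ℝ) → ℝ := fun x =>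
      (1 / (N : ℝ)) * ∑ n ∈ Finset.Icc 1 N,
        ∏ j : Fin (p + 1), (1 / h) * k ((x j - y ((n : ℤ) - (p + 1) + ((j : ℕ) + 1))) / h)
    ∀ x : Fin p → ℝ,
      (∫ ξ : ℝ, g (Fin.cons ξ x)) = ∫ ξ : ℝ, g (Fin.snoc x ξ) :=
  periodic_kde_marginals_shift_invariant_general p N y hy_per h hh k hk_int
end

section
/- Define the context density ϕ(u_1, ..., u_p) = ∫_ℝ g(u_1, ..., u_p, ξ) dξ = (1/N)·Σ_{n=1}^N ∏_{j=1}^p (1/h)·k((u_j − y_{n−(p+1)+j})/h), and the KDE-MM next-step (transition) density under periodic extension, T(x | u_1, ..., u_p) = g(u_1, ..., u_p, x) / ϕ(u_1, ..., u_p) (well defined since k > 0 implies ϕ > 0 everywhere). Then ϕ is a stationary density for this transition kernel: for every (x_2, ..., x_{p+1}) ∈ ℝ^p, ∫_ℝ T(x_{p+1} | x_1, ..., x_p)·ϕ(x_1, ..., x_p) dx_1 = ϕ(x_2, ..., x_{p+1}). Hence, with periodic extension of the training data, the stationary distribution of the order-p Markov chain generated by the KDE-MM equals the KDE of the context distribution.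 -/
/-!
Since `ϕ > 0`, the integrand `T · ϕ` is just the joint density `g(ξ, x_2, …, x_{p+1})`. Integrating
out `ξ` kills the first kernel factor of each summand (the kernel has mass one), which leaves the
context density `ϕ` with the summation index shifted by one; periodicity of `y` makes the shift
harmless, because a sum over a full period does not see it.
-/

open MeasureTheory Finset

theorem integral_rescaled_kernel (k : ℝ → ℝ) {h : ℝ} (hh : 0 < h) (c : ℝ) :
    ∫ x, 1 / h * k ((x - c) / h) = ∫ r, k r := by
  rw [integral_const_mul, integral_sub_right_eq_self (fun x => k (x / h)),
    Measure.integral_comp_div, abs_of_pos hh, smul_eq_mul, one_div, inv_mul_cancel_left₀ hh.ne']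

theorem integral_sum_rescaled_kernel_mul {ι : Type*} {k : ℝ → ℝ} (hk : ∫ r, k r = 1)
    {h : ℝ} (hh : 0 < h) (s : Finset ι) (c w : ι → ℝ) :
    ∫ x, ∑ i ∈ s, 1 / h * k ((x - c i) / h) * w i = ∑ i ∈ s, w i := by
  have hk_int : Integrable k := .of_integral_ne_zero (by simp [hk])
  rw [integral_finsetSum _ fun i _ =>
    (((hk_int.comp_div hh.ne').comp_sub_right (c i)).const_mul _).mul_const _]
  simp_rw [integral_mul_const, integral_rescaled_kernel k hh, hk, one_mul]

theorem Fin.snoc_init_cons_of_succ_eq {α : Type*} {p : ℕ} (ξ : α) (v : Fin p → α) (i : Fin p)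
    (hi : (i : ℕ) + 1 = p) :
    (Fin.snoc (Fin.init (Fin.cons ξ v : Fin (p + 1) → α)) (v i) : Fin (p + 1) → α) =
      Fin.cons ξ v := by
  rw [← Fin.cons_succ (α := fun _ => α) ξ v i, show i.succ = Fin.last p from Fin.ext hi,
    Fin.snoc_init_self]

theorem Fin.prod_univ_cons_offset {M α : Type*} [CommMonoid M] {q : ℕ} (f : ℤ → α → M) (a : ℤ)
    (ξ : α) (v : Fin q → α) :
    ∏ j : Fin (q + 1), f (a + ((j : ℕ) + 1)) ((Fin.cons ξ v : Fin (q + 1) → α) j) =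
      f (a + 1) ξ * ∏ j : Fin q, f (a + 1 + ((j : ℕ) + 1)) (v j) := by
  simp [Fin.prod_univ_succ, add_assoc, add_comm (1 : ℤ)]

theorem Function.Periodic.sum_Icc_add_one {M : Type*} [AddCancelCommMonoid M] {F : ℤ → M}
    {N : ℕ} (hF : Function.Periodic F N) :
    ∑ n ∈ Icc 1 N, F (n + 1) = ∑ n ∈ Icc 1 N, F n := by
  have hrange : ∀ G : ℤ → M, ∑ n ∈ Icc 1 N, G n = ∑ i ∈ range N, G (i + 1) := fun G => by
    rw [← Finset.Ico_add_one_right_eq_Icc, sum_Ico_eq_sum_range]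
    simp [add_comm]
  rw [hrange fun n => F (n + 1), hrange]
  apply add_right_cancel (b := F 1)
  calc ∑ i ∈ range N, F (i + 1 + 1) + F 1 = ∑ i ∈ range (N + 1), F (i + 1) := by
        rw [sum_range_succ']; push_cast; rfl
    _ = ∑ i ∈ range N, F (i + 1) + F 1 := by rw [sum_range_succ, add_comm (N : ℤ), hF]

/-- With periodic extension of the training data, the KDE of the context distribution `ϕ`
is a stationary density for the KDE-MM next-step transition kernel
`T(x | u) = g(u, x)/ϕ(u)`: integrating `T(x_{p+1} | x_1,…,x_p) ϕ(x_1,…,x_p)` over `x_1`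
returns `ϕ(x_2,…,x_{p+1})`. -/
theorem periodic_kdemm_stationary_density
    (p N : ℕ) (hp : 1 ≤ p) (hN : 1 ≤ N)
    (y : ℤ → ℝ) (hy_per : ∀ n : ℤ, y (n + N) = y n)
    (h : ℝ) (hh : 0 < h)
    (k : ℝ → ℝ) (hk_pos : ∀ r, 0 < k r)
    (hk_int : ∫ r : ℝ, k r = 1) :
    let g : (Fin (p + 1) → ℝ) → ℝ := fun x =>
      (1 / (N : ℝ)) * ∑ n ∈ Finset.Icc 1 N,
        ∏ j : Fin (p + 1), (1 / h) * k ((x j - y ((n : ℤ) - (p + 1) + ((j : ℕ) + 1))) / h)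
    let ϕ : (Fin p → ℝ) → ℝ := fun u =>
      (1 / (N : ℝ)) * ∑ n ∈ Finset.Icc 1 N,
        ∏ j : Fin p, (1 / h) * k ((u j - y ((n : ℤ) - (p + 1) + ((j : ℕ) + 1))) / h)
    let T : ℝ → (Fin p → ℝ) → ℝ := fun x u => g (Fin.snoc u x) / ϕ u
    ∀ v : Fin p → ℝ,
      (∫ ξ : ℝ,
          T (v ⟨p - 1, by omega⟩) (Fin.init (Fin.cons ξ v : Fin (p + 1) → ℝ)) *
            ϕ (Fin.init (Fin.cons ξ v : Fin (p + 1) → ℝ))) = ϕ v := by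
  intro g ϕ T v
  have hϕ_pos : ∀ u, 0 < ϕ u := fun u => mul_pos (by positivity) <| sum_pos
    (fun n _ => prod_pos fun j _ => mul_pos (by positivity) (hk_pos _)) (nonempty_Icc.2 hN)
  let F : ℤ → ℝ := fun m => ∏ j : Fin p, 1 / h * k ((v j - y (m + ((j : ℕ) + 1))) / h)
  have hF : Function.Periodic F N := fun m => by simp only [F, add_right_comm m (N : ℤ), hy_per]
  calc _ = ∫ ξ, g (Fin.cons ξ v) := by
        congr 1 with ξ
        simp only [T]
        rw [Fin.snoc_init_cons_of_succ_eq _ _ _ (Nat.sub_add_cancel hp),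
          div_mul_cancel₀ _ (hϕ_pos _).ne']
    _ = ∫ ξ, 1 / N * ∑ n ∈ Icc 1 N,
          1 / h * k ((ξ - y (n - (p + 1) + 1)) / h) * F (n - (p + 1) + 1) := by
        simp only [g, F, Fin.prod_univ_cons_offset (fun m x => 1 / h * k ((x - y m) / h))]
    _ = 1 / N * ∑ n ∈ Icc 1 N, F (n + 1 - (p + 1)) := by
        rw [integral_const_mul, integral_sum_rescaled_kernel_mul hk_int hh]
        simp only [sub_add_eq_add_sub]
    _ = ϕ v := by rw [(hF.sub_const _).sum_Icc_add_one]
end
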